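/- Let a > 0, n a positive integer, and W̃ an N×N matrix with nonnegative entries and positive diagonal entries. Then at every point v ∈ (0,1)^N whose entries are pairwise distinct, the Hessian matrix of the energy E(·,W̃) is positive semidefinite. -/

import Mathlib

/-- Penaliser `Ψ̃_{a,n}(s) = a·((|s|−1)^(2n) − 1)`. -/
noncomputable def psi (a : ℝ) (n : ℕ) (s : ℝ) : ℝ := a * ((|s| - 1) ^ (2 * n) - 1)

/-- Energy `E(v,W̃) = (1/2)·Σᵢ Σⱼ w̃ᵢⱼ·(Ψ̃(vⱼ−vᵢ) + Ψ̃(vⱼ+vᵢ))`. -/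
noncomputable def energy {N : ℕ} (a : ℝ) (n : ℕ) (W : Matrix (Fin N) (Fin N) ℝ)
    (v : Fin N → ℝ) : ℝ :=
  (1 / 2) * ∑ i, ∑ j, W i j * (psi a n (v j - v i) + psi a n (v j + v i))

/-- Hessian matrix of the energy at `v`. -/
noncomputable def hessianE {N : ℕ} (a : ℝ) (n : ℕ) (W : Matrix (Fin N) (Fin N) ℝ)
    (v : Fin N → ℝ) : Matrix (Fin N) (Fin N) ℝ :=
  fun i j => iteratedFDeriv ℝ 2 (energy a n W) v ![Pi.single i 1, Pi.single j 1]

/-! Near a point `v` with pairwise distinct positive coordinates, `|u j - u i|` and `|u j + u i|`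
agree with the linear forms `sign (v j - v i) * (u j - u i)` and `u j + u i`. Hence the energy
coincides near `v` with a nonnegative combination of ridge functions `u ↦ φ (L u)`, where
`φ s = a * ((s - 1) ^ (2 * n) - 1)` is convex and `L` is linear. The Hessian of such a ridge
function is `φ'' (L v) • ℓ ℓᵀ` with `ℓ i = L eᵢ`, which is positive semidefinite. -/

open Filter Topology

noncomputable def hessianMatrix {ι : Type*} [Fintype ι] [DecidableEq ι] (f : (ι → ℝ) → ℝ)
    (v : ι → ℝ) : Matrix ι ι ℝ :=
  fun i j => iteratedFDeriv ℝ 2 f v ![Pi.single i 1, Pi.single j 1]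

section hessianMatrix

variable {ι : Type*} [Fintype ι] [DecidableEq ι] {v : ι → ℝ}

theorem hessianMatrix_congr {f g : (ι → ℝ) → ℝ} (h : f =ᶠ[𝓝 v] g) :
    hessianMatrix f v = hessianMatrix g v := by
  ext i j
  simp only [hessianMatrix, (h.iteratedFDeriv ℝ 2).eq_of_nhds]

theorem hessianMatrix_add {f g : (ι → ℝ) → ℝ} (hf : ContDiffAt ℝ 2 f v)
    (hg : ContDiffAt ℝ 2 g v) :
    hessianMatrix (fun u => f u + g u) v = hessianMatrix f v + hessianMatrix g v := by
  ext i j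
  simp [hessianMatrix, fun_iteratedFDeriv_add_apply hf hg]

theorem hessianMatrix_const_mul (c : ℝ) {f : (ι → ℝ) → ℝ} (hf : ContDiffAt ℝ 2 f v) :
    hessianMatrix (fun u => c * f u) v = c • hessianMatrix f v := by
  ext i j
  simp [hessianMatrix, ← smul_eq_mul, iteratedFDeriv_const_smul_apply' hf]

theorem hessianMatrix_sum {κ : Type*} (s : Finset κ) {f : κ → (ι → ℝ) → ℝ}
    (hf : ∀ k ∈ s, ContDiffAt ℝ 2 (f k) v) :
    hessianMatrix (fun u => ∑ k ∈ s, f k u) v = ∑ k ∈ s, hessianMatrix (f k) v := by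
  ext i j
  simp [hessianMatrix, iteratedFDeriv_fun_sum_apply hf, Matrix.sum_apply]

theorem hessianMatrix_comp_clm {φ : ℝ → ℝ} (hφ : ContDiff ℝ 2 φ) (L : (ι → ℝ) →L[ℝ] ℝ) :
    hessianMatrix (fun u => φ (L u)) v =
      iteratedDeriv 2 φ (L v) •
        Matrix.vecMulVec (fun i => L (Pi.single i 1)) (fun i => L (Pi.single i 1)) := by
  ext i j
  simp only [hessianMatrix, ← Function.comp_def, L.iteratedFDeriv_comp_right hφ v le_rfl,
    ContinuousMultilinearMap.compContinuousLinearMap_apply,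
    iteratedFDeriv_apply_eq_iteratedDeriv_mul_prod, Function.comp_apply, Fin.prod_univ_two,
    Matrix.cons_val_zero, Matrix.cons_val_one, smul_eq_mul, Matrix.smul_apply,
    Matrix.vecMulVec_apply]
  ring

theorem posSemidef_hessianMatrix_comp_clm {φ : ℝ → ℝ} (hφ : ContDiff ℝ 2 φ)
    (L : (ι → ℝ) →L[ℝ] ℝ) (hφ₂ : 0 ≤ iteratedDeriv 2 φ (L v)) :
    (hessianMatrix (fun u => φ (L u)) v).PosSemidef := by
  rw [hessianMatrix_comp_clm hφ]
  exact (Matrix.posSemidef_vecMulVec_self_star _).smul hφ₂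

end hessianMatrix

theorem eventually_abs_eq_sign_mul {X : Type*} [TopologicalSpace X] {g : X → ℝ} {v : X}
    (hg : ContinuousAt g v) (hv : g v ≠ 0) :
    ∀ᶠ u in 𝓝 v, |g u| = SignType.sign (g v) * g u := by
  have hsign : ∀ᶠ u in 𝓝 v, SignType.sign (g u) = SignType.sign (g v) :=
    ((continuousAt_sign_of_ne_zero hv).comp hg).eventually_mem
      ((isOpen_discrete {SignType.sign (g v)}).mem_nhds rfl)
  filter_upwards [hsign] with u hu
  rw [← hu, sign_mul_self]

noncomputable def psiPoly (a : ℝ) (n : ℕ) (s : ℝ) : ℝ := a * ((s - 1) ^ (2 * n) - 1)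

theorem psi_eq_psiPoly_abs (a : ℝ) (n : ℕ) (s : ℝ) : psi a n s = psiPoly a n |s| := rfl

@[fun_prop]
theorem contDiff_psiPoly (a : ℝ) (n : ℕ) {k : WithTop ℕ∞} : ContDiff ℝ k (psiPoly a n) := by
  unfold psiPoly
  fun_prop

theorem iteratedDeriv_two_psiPoly (a : ℝ) (n : ℕ) (t : ℝ) :
    iteratedDeriv 2 (psiPoly a n) t
      = a * (2 * n * ((2 * n - 1 : ℕ) * (t - 1) ^ (2 * n - 2))) := by
  have hderiv : deriv (psiPoly a n) = fun s => a * (2 * n * (s - 1) ^ (2 * n - 1)) := by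
    funext s
    unfold psiPoly
    simp
  simp [iteratedDeriv_succ, hderiv, Nat.sub_sub]

theorem iteratedDeriv_two_psiPoly_nonneg {a : ℝ} (ha : 0 ≤ a) (n : ℕ) (t : ℝ) :
    0 ≤ iteratedDeriv 2 (psiPoly a n) t := by
  rw [iteratedDeriv_two_psiPoly]
  have heven : Even (2 * n - 2) := ⟨n - 1, by omega⟩
  have := heven.pow_nonneg (t - 1)
  positivity

theorem energy_eventuallyEq_sum_psiPoly {N : ℕ} (a : ℝ) (n : ℕ) (W : Matrix (Fin N) (Fin N) ℝ)
    {v : Fin N → ℝ} (hpos : ∀ i, 0 < v i) (hdist : ∀ i j, i ≠ j → v i ≠ v j) :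
    energy a n W =ᶠ[𝓝 v] fun u => (1 / 2) * ∑ i, ∑ j, W i j *
      (psiPoly a n ((SignType.sign (v j - v i) : ℝ) * (u j - u i)) + psiPoly a n (u j + u i)) := by
  have hdiff (i j : Fin N) :
      ∀ᶠ u in 𝓝 v, |u j - u i| = (SignType.sign (v j - v i) : ℝ) * (u j - u i) := by
    rcases eq_or_ne i j with rfl | hij
    · simp
    · exact eventually_abs_eq_sign_mul (g := fun u : Fin N → ℝ => u j - u i) (by fun_prop)
        (sub_ne_zero.2 (hdist j i hij.symm))
  have hsum (i j : Fin N) : ∀ᶠ u in 𝓝 v, |u j + u i| = u j + u i :=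
    (((continuous_apply j).add (continuous_apply i)).continuousAt.eventually
      (lt_mem_nhds (add_pos (hpos j) (hpos i)))).mono fun u hu => abs_of_pos hu
  filter_upwards [eventually_all.2 fun i => eventually_all.2 (hdiff i),
    eventually_all.2 fun i => eventually_all.2 (hsum i)] with u hdiff_u hsum_u
  simp only [energy, psi_eq_psiPoly_abs, hdiff_u, hsum_u]

theorem stmt6_general (a : ℝ) (ha : 0 < a) (n : ℕ) (N : ℕ)
    (W : Matrix (Fin N) (Fin N) ℝ) (hW : ∀ i j, 0 ≤ W i j)
    (v : Fin N → ℝ) (hv : ∀ i, v i ∈ Set.Ioo (0 : ℝ) 1)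
    (hdist : ∀ i j, i ≠ j → v i ≠ v j) :
    (hessianE a n W v).PosSemidef := by
  have hridge (L : (Fin N → ℝ) →L[ℝ] ℝ) :
      (hessianMatrix (fun u => psiPoly a n (L u)) v).PosSemidef :=
    posSemidef_hessianMatrix_comp_clm (contDiff_psiPoly a n) L
      (iteratedDeriv_two_psiPoly_nonneg ha.le n _)
  have hterm (i j : Fin N) : (hessianMatrix (fun u => W i j *
      (psiPoly a n ((SignType.sign (v j - v i) : ℝ) * (u j - u i)) + psiPoly a n (u j + u i)))
        v).PosSemidef := by
    have h1 := hridge ((SignType.sign (v j - v i) : ℝ) • (.proj j - .proj i))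
    have h2 := hridge (.proj j + .proj i)
    simp only [smul_apply, sub_apply, add_apply, ContinuousLinearMap.proj_apply,
      smul_eq_mul] at h1 h2
    rw [hessianMatrix_const_mul _ (by fun_prop), hessianMatrix_add (by fun_prop) (by fun_prop)]
    exact (h1.add h2).smul (hW i j)
  change (hessianMatrix (energy a n W) v).PosSemidef
  rw [hessianMatrix_congr (energy_eventuallyEq_sum_psiPoly a n W (fun i => (hv i).1) hdist),
    hessianMatrix_const_mul _ (by fun_prop), hessianMatrix_sum _ fun i _ => by fun_prop]
  refine (Matrix.posSemidef_sum _ fun i _ => ?_).smul (by norm_num)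
  rw [hessianMatrix_sum _ fun j _ => by fun_prop]
  exact Matrix.posSemidef_sum _ fun j _ => hterm i j

/-- For `a > 0`, any positive integer `n`, and a nonnegative weight matrix with
positive diagonal, the Hessian of the energy is positive semidefinite at every `v ∈ (0,1)^N`
with pairwise distinct entries. -/
theorem stmt6 (a : ℝ) (ha : 0 < a) (n : ℕ) (hn : 0 < n) (N : ℕ)
    (W : Matrix (Fin N) (Fin N) ℝ) (hW : ∀ i j, 0 ≤ W i j) (hdiag : ∀ i, 0 < W i i)
    (v : Fin N → ℝ) (hv : ∀ i, v i ∈ Set.Ioo (0 : ℝ) 1)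
    (hdist : ∀ i j, i ≠ j → v i ≠ v j) :
    (hessianE a n W v).PosSemidef :=
  stmt6_general a ha n N W hW v hv hdist
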